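/- arXiv:2601.17250 — 3 statements merged into one kernel-verified Lean document; each statement's English description precedes it below -/
import Mathlib

section
/- Let x, l, u, y, k : [0,T] → ℝ be continuous functions with l ≤ u, and suppose (y, k) solves the Skorokhod problem on [l,u] for x: y_t = x_t + k_t, l_t ≤ y_t ≤ u_t for all t, k = k⁺ − k⁻ with k⁺, k⁻ continuous nondecreasing starting at 0, ∫₀ᵀ (y_t − l_t) dk⁺_t = ∫₀ᵀ (u_t − y_t) dk⁻_t = 0. Then for all t ∈ [0,T], k_t = −max{ (x_0 − u_0)⁺ ∧ inf_{r ∈ [0,t]} (x_r − l_r), sup_{s ∈ [0,t]} [ (x_s − u_s) ∧ inf_{r ∈ [s,t]} (x_r − l_r) ] }. -/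
/-!
Fix `s ≤ t`. If `k⁺_s < k⁺_t`, let `r ∈ [s, t]` be the first time at which `k⁺` reaches `k⁺_t`.
Since `k⁺` charges every interval `(ρ, r]`, the flatness condition puts zeros of `y - l`
arbitrarily close to `r`, so `y_r = l_r` and `x_r - l_r = -k_r ≤ -k_t`; if `k⁺_s = k⁺_t`, then
`x_s - u_s ≤ -k_s ≤ -k_t`. Either way the term of the maximum at `s` is at most `-k_t`.
Conversely, at the first time `σ ≤ t` at which `k⁻` reaches `k⁻_t` we have `y_σ = u_σ`, and
`-k_t ≤ -k_ρ ≤ x_ρ - l_ρ` for all `ρ ∈ [σ, t]`, so the term at `s = σ` is at least `-k_t`;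
if `k⁻_t = 0` the first term plays this role, because `(x_0 - u_0)⁺ = 0`.
-/

open MeasureTheory Set

namespace StieltjesFunction

theorem exists_mem_Ioc_eq_zero_of_setIntegral_eq_zero (f : StieltjesFunction ℝ) {g : ℝ → ℝ}
    {a b : ℝ} (hg : IntegrableOn g (Icc a b) f.measure) (hg0 : ∀ ρ ∈ Icc a b, 0 ≤ g ρ)
    (hint : ∫ ρ in Icc a b, g ρ ∂f.measure = 0) {ρ r : ℝ} (hρ : a ≤ ρ) (hr : r ≤ b)
    (hf : f ρ < f r) : ∃ q ∈ Ioc ρ r, g q = 0 := by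
  by_contra! hne
  have hae : g =ᵐ[f.measure.restrict (Icc a b)] 0 :=
    (setIntegral_eq_zero_iff_of_nonneg_ae
      ((ae_restrict_iff' measurableSet_Icc).2 (Filter.Eventually.of_forall hg0)) hg).1 hint
  have hnull : f.measure (Ioc ρ r) = 0 := by
    refine measure_eq_zero_iff_ae_notMem.2 ?_
    filter_upwards [(ae_restrict_iff' measurableSet_Icc).1 hae] with q hq hqI
    exact hne q hqI (hq (Ioc_subset_Icc_self.trans (Icc_subset_Icc hρ hr) hqI))
  rw [f.measure_Ioc, ENNReal.ofReal_eq_zero] at hnull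
  linarith

theorem exists_mem_Icc_eq_zero_and_eq_of_lt (f : StieltjesFunction ℝ) (hf : Continuous f)
    {g : ℝ → ℝ} {a b : ℝ} (hg : ContinuousOn g (Icc a b)) (hg0 : ∀ ρ ∈ Icc a b, 0 ≤ g ρ)
    (hint : ∫ ρ in Icc a b, g ρ ∂f.measure = 0) {s t : ℝ} (hs : a ≤ s) (ht : t ≤ b)
    (hlt : f s < f t) : ∃ r ∈ Icc s t, g r = 0 ∧ f r = f t := by
  have hst : s ≤ t := (f.mono.reflect_lt hlt).le
  set F := Icc s t ∩ f ⁻¹' {f t}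
  have hrF : sInf F ∈ F :=
    (isClosed_Icc.inter (isClosed_singleton.preimage hf)).csInf_mem
      ⟨t, ⟨hst, le_rfl⟩, rfl⟩ ⟨s, fun q hq => hq.1.1⟩
  set r := sInf F
  have hfr : f r = f t := hrF.2
  have hsr : s < r := hrF.1.1.lt_of_ne fun h => hlt.ne (h ▸ hfr)
  have hbefore : ∀ ρ, s ≤ ρ → ρ < r → f ρ < f r := fun ρ hsρ hρr =>
    hfr ▸ (f.mono (hρr.le.trans hrF.1.2)).lt_of_ne fun h =>
      hρr.not_ge (csInf_le ⟨s, fun q hq => hq.1.1⟩ ⟨⟨hsρ, hρr.le.trans hrF.1.2⟩, h⟩)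
  have hZ : IsClosed (Icc a b ∩ g ⁻¹' {0}) :=
    hg.preimage_isClosed_of_isClosed isClosed_Icc isClosed_singleton
  have hrZ : r ∈ closure (Icc a b ∩ g ⁻¹' {0}) := by
    refine Metric.mem_closure_iff.2 fun ε hε => ?_
    obtain ⟨q, hq, hgq⟩ := f.exists_mem_Ioc_eq_zero_of_setIntegral_eq_zero hg.integrableOn_Icc
      hg0 hint (hs.trans (le_max_left s (r - ε))) (hrF.1.2.trans ht)
      (hbefore _ (le_max_left _ _) (max_lt hsr (by linarith)))
    refine ⟨q, ⟨⟨?_, hq.2.trans (hrF.1.2.trans ht)⟩, hgq⟩, ?_⟩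
    · linarith [hq.1, le_max_left s (r - ε)]
    · rw [Real.dist_eq, abs_of_nonneg (by linarith [hq.2])]
      linarith [hq.1, le_max_right s (r - ε)]
  exact ⟨r, hrF.1, (hZ.closure_eq ▸ hrZ).2, hfr⟩

end StieltjesFunction

structure IsSkorokhodSolution_s3 (T : ℝ) (x l u y : ℝ → ℝ) (kp km : StieltjesFunction ℝ) :
    Prop where
  continuous_kp : Continuous kp
  continuous_km : Continuous km
  kp_zero : kp 0 = 0
  km_zero : km 0 = 0
  eq_add : ∀ t ∈ Icc 0 T, y t = x t + (kp t - km t)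
  lower_le : ∀ t ∈ Icc 0 T, l t ≤ y t
  le_upper : ∀ t ∈ Icc 0 T, y t ≤ u t
  integral_kp : ∫ t in Icc 0 T, (y t - l t) ∂kp.measure = 0
  integral_km : ∫ t in Icc 0 T, (u t - y t) ∂km.measure = 0

namespace IsSkorokhodSolution_s3

variable {T : ℝ} {x l u y : ℝ → ℝ} {kp km : StieltjesFunction ℝ}

theorem neg_regulator_le_sub_lower (h : IsSkorokhodSolution_s3 T x l u y kp km) {ρ : ℝ}
    (hρ : ρ ∈ Icc 0 T) : km ρ - kp ρ ≤ x ρ - l ρ := by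
  linarith [h.eq_add ρ hρ, h.lower_le ρ hρ]

theorem sub_upper_le_neg_regulator (h : IsSkorokhodSolution_s3 T x l u y kp km) {ρ : ℝ}
    (hρ : ρ ∈ Icc 0 T) : x ρ - u ρ ≤ km ρ - kp ρ := by
  linarith [h.eq_add ρ hρ, h.le_upper ρ hρ]

theorem neg_regulator_le_csInf (h : IsSkorokhodSolution_s3 T x l u y kp km) {σ t : ℝ}
    (hσ : 0 ≤ σ) (hσt : σ ≤ t) (ht : t ≤ T) (hkm : km t ≤ km σ) :
    km t - kp t ≤ sInf ((fun r => x r - l r) '' Icc σ t) := by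
  refine le_csInf ((nonempty_Icc.2 hσt).image _) ?_
  rintro _ ⟨ρ, hρ, rfl⟩
  have hkm' : km t ≤ km ρ := hkm.trans (km.mono hρ.1)
  linarith [kp.mono hρ.2, h.neg_regulator_le_sub_lower ⟨hσ.trans hρ.1, hρ.2.trans ht⟩]

theorem min_le_neg_regulator (h : IsSkorokhodSolution_s3 T x l u y kp km)
    (hl : ContinuousOn l (Icc 0 T)) (hy : ContinuousOn y (Icc 0 T)) {s t c : ℝ}
    (hbdd : BddBelow ((fun r => x r - l r) '' Icc s t)) (hs : 0 ≤ s) (hst : s ≤ t)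
    (ht : t ≤ T) (hc : c ≤ km s - kp s) :
    min c (sInf ((fun r => x r - l r) '' Icc s t)) ≤ km t - kp t := by
  rcases (kp.mono hst).lt_or_eq with hlt | heq
  · obtain ⟨r, hr, hyr, hkpr⟩ := kp.exists_mem_Icc_eq_zero_and_eq_of_lt h.continuous_kp
      (hy.sub hl) (fun ρ hρ => sub_nonneg.2 (h.lower_le ρ hρ)) h.integral_kp hs ht hlt
    have hrT : r ∈ Icc 0 T := ⟨hs.trans hr.1, hr.2.trans ht⟩
    calc min c (sInf ((fun r => x r - l r) '' Icc s t))
        ≤ x r - l r := (min_le_right _ _).trans (csInf_le hbdd ⟨r, hr, rfl⟩)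
      _ ≤ km t - kp t := by
        linarith [h.eq_add r hrT, km.mono hr.2, show y r - l r = 0 from hyr]
  · linarith [min_le_left c (sInf ((fun r => x r - l r) '' Icc s t)), km.mono hst]

theorem neg_regulator_le_max (h : IsSkorokhodSolution_s3 T x l u y kp km)
    (hu : ContinuousOn u (Icc 0 T)) (hy : ContinuousOn y (Icc 0 T)) {t : ℝ}
    (ht0 : 0 ≤ t) (htT : t ≤ T)
    (hbdd : BddAbove ((fun s => min (x s - u s) (sInf ((fun r => x r - l r) '' Icc s t)))
      '' Icc 0 t)) :
    km t - kp t ≤ max (min 0 (sInf ((fun r => x r - l r) '' Icc 0 t)))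
      (sSup ((fun s => min (x s - u s) (sInf ((fun r => x r - l r) '' Icc s t))) '' Icc 0 t)) := by
  rcases (km.mono ht0).lt_or_eq with hlt | heq
  · obtain ⟨σ, hσ, hyσ, hkmσ⟩ := km.exists_mem_Icc_eq_zero_and_eq_of_lt h.continuous_km
      (hu.sub hy) (fun ρ hρ => sub_nonneg.2 (h.le_upper ρ hρ)) h.integral_km le_rfl htT hlt
    have hσT : σ ∈ Icc 0 T := ⟨hσ.1, hσ.2.trans htT⟩
    refine le_max_of_le_right (le_trans (le_min ?_ ?_) (le_csSup hbdd ⟨σ, hσ, rfl⟩))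
    · linarith [h.eq_add σ hσT, kp.mono hσ.2, show u σ - y σ = 0 from hyσ]
    · exact h.neg_regulator_le_csInf hσ.1 hσ.2 htT hkmσ.ge
  · refine le_max_of_le_left (le_min ?_ (h.neg_regulator_le_csInf le_rfl ht0 htT heq.ge))
    linarith [kp.mono ht0, h.kp_zero, h.km_zero]

end IsSkorokhodSolution_s3

theorem stmt_3_general (T : ℝ)
    (x l u y : ℝ → ℝ) (kp km : StieltjesFunction ℝ)
    (hx : ContinuousOn x (Set.Icc 0 T)) (hl : ContinuousOn l (Set.Icc 0 T))
    (hu : ContinuousOn u (Set.Icc 0 T)) (hy : ContinuousOn y (Set.Icc 0 T))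
    (hkpC : Continuous kp) (hkmC : Continuous km)
    (hkp0 : kp 0 = 0) (hkm0 : km 0 = 0)
    (hyx : ∀ t ∈ Set.Icc 0 T, y t = x t + (kp t - km t))
    (hly : ∀ t ∈ Set.Icc 0 T, l t ≤ y t)
    (hyu : ∀ t ∈ Set.Icc 0 T, y t ≤ u t)
    (hflat1 : ∫ t in Set.Icc 0 T, (y t - l t) ∂kp.measure = 0)
    (hflat2 : ∫ t in Set.Icc 0 T, (u t - y t) ∂km.measure = 0) :
    ∀ t ∈ Set.Icc 0 T,
      kp t - km t =
        - max (min (max (x 0 - u 0) 0) (sInf ((fun r => x r - l r) '' Set.Icc 0 t)))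
            (sSup ((fun s => min (x s - u s) (sInf ((fun r => x r - l r) '' Set.Icc s t)))
              '' Set.Icc 0 t)) := by
  rintro t ⟨ht0, htT⟩
  have h : IsSkorokhodSolution_s3 T x l u y kp km :=
    ⟨hkpC, hkmC, hkp0, hkm0, hyx, hly, hyu, hflat1, hflat2⟩
  have hx0 : x 0 - u 0 ≤ 0 := by
    simpa [hkp0, hkm0] using h.sub_upper_le_neg_regulator ⟨le_rfl, ht0.trans htT⟩
  have hbdd : ∀ s ∈ Icc 0 t, BddBelow ((fun r => x r - l r) '' Icc s t) := fun s hs =>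
    (isCompact_Icc.image_of_continuousOn
      ((hx.sub hl).mono (Icc_subset_Icc hs.1 htT))).bddBelow
  have hbddSup : BddAbove ((fun s => min (x s - u s) (sInf ((fun r => x r - l r) '' Icc s t)))
      '' Icc 0 t) := ⟨x t - l t, by
    rintro _ ⟨s, hs, rfl⟩
    exact (min_le_right _ _).trans (csInf_le (hbdd s hs) ⟨t, ⟨hs.2, le_rfl⟩, rfl⟩)⟩
  rw [max_eq_right hx0, ← neg_eq_iff_eq_neg, neg_sub]
  refine le_antisymm (h.neg_regulator_le_max hu hy ht0 htT hbddSup) (max_le ?_ ?_)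
  · exact h.min_le_neg_regulator hl hy (hbdd 0 ⟨le_rfl, ht0⟩) le_rfl ht0 htT
      (by rw [hkp0, hkm0, sub_zero])
  · refine csSup_le ((nonempty_Icc.2 ht0).image _) ?_
    rintro _ ⟨s, hs, rfl⟩
    exact h.min_le_neg_regulator hl hy (hbdd s hs) hs.1 hs.2 htT
      (h.sub_upper_le_neg_regulator ⟨hs.1, hs.2.trans htT⟩)

/-- Explicit representation of the regulator `k = k⁺ − k⁻` of the deterministic
Skorokhod problem on the time-dependent interval `[l, u]`. -/
theorem stmt_3 (T : ℝ) (hT : 0 ≤ T)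
    (x l u y : ℝ → ℝ) (kp km : StieltjesFunction ℝ)
    (hx : ContinuousOn x (Set.Icc 0 T)) (hl : ContinuousOn l (Set.Icc 0 T))
    (hu : ContinuousOn u (Set.Icc 0 T)) (hy : ContinuousOn y (Set.Icc 0 T))
    (hkpC : Continuous kp) (hkmC : Continuous km)
    (hkp0 : kp 0 = 0) (hkm0 : km 0 = 0)
    (hlu : ∀ t ∈ Set.Icc 0 T, l t ≤ u t)
    (hyx : ∀ t ∈ Set.Icc 0 T, y t = x t + (kp t - km t))
    (hly : ∀ t ∈ Set.Icc 0 T, l t ≤ y t)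
    (hyu : ∀ t ∈ Set.Icc 0 T, y t ≤ u t)
    (hflat1 : ∫ t in Set.Icc 0 T, (y t - l t) ∂kp.measure = 0)
    (hflat2 : ∫ t in Set.Icc 0 T, (u t - y t) ∂km.measure = 0) :
    ∀ t ∈ Set.Icc 0 T,
      kp t - km t =
        - max (min (max (x 0 - u 0) 0) (sInf ((fun r => x r - l r) '' Set.Icc 0 t)))
            (sSup ((fun s => min (x s - u s) (sInf ((fun r => x r - l r) '' Set.Icc s t)))
              '' Set.Icc 0 t)) :=
  stmt_3_general T x l u y kp km hx hl hu hy hkpC hkmC hkp0 hkm0 hyx hly hyu hflat1 hflat2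
end

section
/- Let (xⁱ, lⁱ, uⁱ), i = 1,2, be continuous data with lⁱ ≤ uⁱ, and let (yⁱ, kⁱ) be solutions to the corresponding Skorokhod problems on [lⁱ, uⁱ] for xⁱ. Then there exists a constant C > 0 (independent of the data) such that sup_{t∈[0,T]} |k¹_t − k²_t| ≤ C ( sup_{t∈[0,T]} |x¹_t − x²_t| + sup_{t∈[0,T]} max(|l¹_t − l²_t|, |u¹_t − u²_t|) ). -/
/-!
Let `k = k¹ − k²` and `d = y¹ − y² = (x¹ − x²) + k`, and let `M_x`, `M_b` be the two suprema.
At time `t`, go back to the last time `τ ≤ t` with `d τ ≤ M_x + M_b`; such a time exists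
because `d 0 = x¹ 0 − x² 0`. On `(τ, t]` we have `y¹ > y² + M_b ≥ l² + M_b ≥ l¹` and likewise
`y² < u²`, so the flat-off conditions freeze `k¹⁺` and `k²⁻` there, and `k` can only decrease:
`k t ≤ k τ = d τ − (x¹ τ − x² τ) ≤ 2 M_x + M_b`. By symmetry `|k t| ≤ 2 (M_x + M_b)`.
-/

open MeasureTheory

/-- `(y, k⁺ − k⁻)` solves the Skorokhod problem on `[l,u]` for `x` on `[0,T]`. -/
def IsSkorokhodSolution (T : ℝ) (x l u y : ℝ → ℝ) (kp km : StieltjesFunction ℝ) : Prop :=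
  ContinuousOn x (Set.Icc 0 T) ∧ ContinuousOn l (Set.Icc 0 T) ∧
  ContinuousOn u (Set.Icc 0 T) ∧ ContinuousOn y (Set.Icc 0 T) ∧
  Continuous kp ∧ Continuous km ∧ kp 0 = 0 ∧ km 0 = 0 ∧
  (∀ t ∈ Set.Icc 0 T, y t = x t + (kp t - km t)) ∧
  (∀ t ∈ Set.Icc 0 T, l t ≤ y t ∧ y t ≤ u t) ∧
  (∫ t in Set.Icc 0 T, (y t - l t) ∂kp.measure = 0) ∧
  (∫ t in Set.Icc 0 T, (u t - y t) ∂km.measure = 0)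

open Set

lemma IsCompact.le_sSup_image {β : Type*} [TopologicalSpace β] {f : β → ℝ} {K : Set β}
    (hK : IsCompact K) (hf : ContinuousOn f K) {s : β} (hs : s ∈ K) : f s ≤ sSup (f '' K) :=
  le_csSup (hK.bddAbove_image hf) (mem_image_of_mem f hs)

lemma ContinuousOn.exists_last_le {g : ℝ → ℝ} {a b c : ℝ} (hab : a ≤ b)
    (hg : ContinuousOn g (Icc a b)) (ha : g a ≤ c) :
    ∃ τ ∈ Icc a b, g τ ≤ c ∧ ∀ s ∈ Ioc τ b, c < g s := by
  have hclosed : IsClosed (Icc a b ∩ g ⁻¹' Iic c) :=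
    hg.preimage_isClosed_of_isClosed isClosed_Icc isClosed_Iic
  obtain ⟨τ, ⟨hτ, hgτ⟩, hmax⟩ :=
    (isCompact_Icc.of_isClosed_subset hclosed inter_subset_left).exists_isGreatest
      ⟨a, ⟨left_mem_Icc.mpr hab, ha⟩⟩
  refine ⟨τ, hτ, hgτ, fun s hs => not_le.mp fun hgs => ?_⟩
  exact hs.1.not_ge (hmax ⟨⟨hτ.1.trans hs.1.le, hs.2⟩, hgs⟩)

theorem StieltjesFunction.le_of_setIntegral_eq_zero (k : StieltjesFunction ℝ) {f : ℝ → ℝ}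
    {s : Set ℝ} (hfi : IntegrableOn f s k.measure) (hf : ∀ t ∈ s, 0 ≤ f t)
    (hs : MeasurableSet s) (hint : ∫ t in s, f t ∂k.measure = 0) {a b : ℝ}
    (hab : Ioc a b ⊆ s) (hpos : ∀ t ∈ Ioc a b, 0 < f t) : k b ≤ k a := by
  have hnull : k.measure (Function.support f ∩ s) = 0 := by
    simpa [hint] using (setIntegral_pos_iff_support_of_nonneg_ae
      (ae_restrict_of_forall_mem hs hf) hfi).not
  have hIoc : k.measure (Ioc a b) = 0 :=
    measure_mono_null (fun t ht => mem_inter (hpos t ht).ne' (hab ht)) hnull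
  rw [k.measure_Ioc, ENNReal.ofReal_eq_zero] at hIoc
  linarith

namespace IsSkorokhodSolution

variable {T : ℝ} {x l u y : ℝ → ℝ} {kp km : StieltjesFunction ℝ}

lemma regulator_eq (h : IsSkorokhodSolution T x l u y kp km) {t : ℝ} (ht : t ∈ Icc 0 T) :
    kp t - km t = y t - x t := by
  linarith [h.2.2.2.2.2.2.2.2.1 t ht]

lemma eq_input_at_zero (h : IsSkorokhodSolution T x l u y kp km) (hT : 0 ≤ T) : y 0 = x 0 := by
  have := h.regulator_eq (left_mem_Icc.mpr hT)
  rw [h.2.2.2.2.2.2.1, h.2.2.2.2.2.2.2.1] at this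
  linarith

lemma kp_le_of_lower_lt (h : IsSkorokhodSolution T x l u y kp km) {a b : ℝ}
    (hab : Ioc a b ⊆ Icc 0 T) (hlt : ∀ s ∈ Ioc a b, l s < y s) : kp b ≤ kp a :=
  kp.le_of_setIntegral_eq_zero ((h.2.2.2.1.sub h.2.1).integrableOn_compact isCompact_Icc)
    (fun t ht => sub_nonneg.mpr (h.2.2.2.2.2.2.2.2.2.1 t ht).1) measurableSet_Icc
    h.2.2.2.2.2.2.2.2.2.2.1 hab fun s hs => sub_pos.mpr (hlt s hs)

lemma km_le_of_lt_upper (h : IsSkorokhodSolution T x l u y kp km) {a b : ℝ}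
    (hab : Ioc a b ⊆ Icc 0 T) (hlt : ∀ s ∈ Ioc a b, y s < u s) : km b ≤ km a :=
  km.le_of_setIntegral_eq_zero ((h.2.2.1.sub h.2.2.2.1).integrableOn_compact isCompact_Icc)
    (fun t ht => sub_nonneg.mpr (h.2.2.2.2.2.2.2.2.2.1 t ht).2) measurableSet_Icc
    h.2.2.2.2.2.2.2.2.2.2.2 hab fun s hs => sub_pos.mpr (hlt s hs)

lemma regulator_sub_le {x₁ l₁ u₁ y₁ x₂ l₂ u₂ y₂ : ℝ → ℝ} {kp₁ km₁ kp₂ km₂ : StieltjesFunction ℝ}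
    (h₁ : IsSkorokhodSolution T x₁ l₁ u₁ y₁ kp₁ km₁)
    (h₂ : IsSkorokhodSolution T x₂ l₂ u₂ y₂ kp₂ km₂) {Mx Mb : ℝ}
    (hx : ∀ s ∈ Icc 0 T, |x₁ s - x₂ s| ≤ Mx) (hl : ∀ s ∈ Icc 0 T, |l₁ s - l₂ s| ≤ Mb)
    (hu : ∀ s ∈ Icc 0 T, |u₁ s - u₂ s| ≤ Mb) {t : ℝ} (ht : t ∈ Icc 0 T) :
    (kp₁ t - km₁ t) - (kp₂ t - km₂ t) ≤ 2 * Mx + Mb := by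
  have hT : 0 ≤ T := ht.1.trans ht.2
  have h0 : (0 : ℝ) ∈ Icc 0 T := left_mem_Icc.mpr hT
  have hstart : y₁ 0 - y₂ 0 ≤ Mx + Mb := by
    rw [h₁.eq_input_at_zero hT, h₂.eq_input_at_zero hT]
    linarith [le_abs_self (x₁ 0 - x₂ 0), hx 0 h0, abs_nonneg (l₁ 0 - l₂ 0), hl 0 h0]
  have hcont : ContinuousOn (fun s => y₁ s - y₂ s) (Icc 0 t) :=
    (h₁.2.2.2.1.sub h₂.2.2.2.1).mono (Icc_subset_Icc_right ht.2)
  obtain ⟨τ, hτ, hdτ, hgap⟩ := hcont.exists_last_le ht.1 hstart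
  have hτT : τ ∈ Icc 0 T := ⟨hτ.1, hτ.2.trans ht.2⟩
  have hsub : Ioc τ t ⊆ Icc 0 T := fun s hs => ⟨hτ.1.trans hs.1.le, hs.2.trans ht.2⟩
  have hkp₁ : kp₁ t ≤ kp₁ τ := h₁.kp_le_of_lower_lt hsub fun s hs => by
    linarith [hgap s hs, (h₂.2.2.2.2.2.2.2.2.2.1 s (hsub hs)).1,
      le_abs_self (l₁ s - l₂ s), hl s (hsub hs), abs_nonneg (x₁ s - x₂ s), hx s (hsub hs)]
  have hkm₂ : km₂ t ≤ km₂ τ := h₂.km_le_of_lt_upper hsub fun s hs => by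
    linarith [hgap s hs, (h₁.2.2.2.2.2.2.2.2.2.1 s (hsub hs)).2,
      le_abs_self (u₁ s - u₂ s), hu s (hsub hs), abs_nonneg (x₁ s - x₂ s), hx s (hsub hs)]
  calc (kp₁ t - km₁ t) - (kp₂ t - km₂ t) ≤ (kp₁ τ - km₁ τ) - (kp₂ τ - km₂ τ) := by
        linarith [km₁.mono hτ.2, kp₂.mono hτ.2]
    _ = (y₁ τ - y₂ τ) - (x₁ τ - x₂ τ) := by
        rw [h₁.regulator_eq hτT, h₂.regulator_eq hτT]; ring
    _ ≤ 2 * Mx + Mb := by linarith [neg_abs_le (x₁ τ - x₂ τ), hx τ hτT]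

end IsSkorokhodSolution

/-- Lipschitz stability in supremum norm of the Skorokhod regulator with respect to
the input path and the two barriers. -/
theorem stmt_4 :
    ∃ C > (0:ℝ), ∀ (T : ℝ), 0 ≤ T →
      ∀ (x1 l1 u1 y1 x2 l2 u2 y2 : ℝ → ℝ) (kp1 km1 kp2 km2 : StieltjesFunction ℝ),
      (∀ t ∈ Set.Icc 0 T, l1 t ≤ u1 t) → (∀ t ∈ Set.Icc 0 T, l2 t ≤ u2 t) →
      IsSkorokhodSolution T x1 l1 u1 y1 kp1 km1 →
      IsSkorokhodSolution T x2 l2 u2 y2 kp2 km2 →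
      ∀ t ∈ Set.Icc 0 T,
        |(kp1 t - km1 t) - (kp2 t - km2 t)| ≤
          C * (sSup ((fun s => |x1 s - x2 s|) '' Set.Icc 0 T)
            + sSup ((fun s => max |l1 s - l2 s| |u1 s - u2 s|) '' Set.Icc 0 T)) := by
  refine ⟨2, two_pos, fun T _ x1 l1 u1 y1 x2 l2 u2 y2 kp1 km1 kp2 km2 _ _ h1 h2 t ht => ?_⟩
  set Mx := sSup ((fun s => |x1 s - x2 s|) '' Icc 0 T)
  set Mb := sSup ((fun s => max |l1 s - l2 s| |u1 s - u2 s|) '' Icc 0 T)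
  have hx : ∀ s ∈ Icc 0 T, |x1 s - x2 s| ≤ Mx := fun s hs =>
    isCompact_Icc.le_sSup_image (h1.1.sub h2.1).abs hs
  have hb : ∀ s ∈ Icc 0 T, max |l1 s - l2 s| |u1 s - u2 s| ≤ Mb := fun s hs =>
    isCompact_Icc.le_sSup_image ((h1.2.1.sub h2.2.1).abs.sup (h1.2.2.1.sub h2.2.2.1).abs) hs
  have hl : ∀ s ∈ Icc 0 T, |l1 s - l2 s| ≤ Mb := fun s hs => (le_max_left _ _).trans (hb s hs)
  have hu : ∀ s ∈ Icc 0 T, |u1 s - u2 s| ≤ Mb := fun s hs => (le_max_right _ _).trans (hb s hs)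
  have h12 := h1.regulator_sub_le h2 hx hl hu ht
  have h21 := h2.regulator_sub_le h1 (by simpa only [abs_sub_comm] using hx)
    (by simpa only [abs_sub_comm] using hl) (by simpa only [abs_sub_comm] using hu) ht
  have hMx : 0 ≤ Mx := (abs_nonneg _).trans (hx t ht)
  have hMb : 0 ≤ Mb := (abs_nonneg _).trans (hl t ht)
  rw [abs_le]
  constructor <;> linarith
end

section
/- Let φ be an admissible family of integrable random variables indexed by stopping times with E[ess sup_θ φ(θ)⁻] < ∞. For each stopping time θ define v(θ) := ess sup_{τ ∈ T_θ} E[φ(τ) | F_θ], where T_θ is the set of stopping times ≥ θ. Then v is a supermartingale family: for stopping times θ' ≤ θ, E[v(θ) | F_{θ'}] ≤ v(θ') almost surely, and v ≥ φ; moreover v is the smallest supermartingale family dominating φ. -/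
open MeasureTheory Filter Topology

/-! The family `E[φ(τ) | F_θ]`, `τ ≥ θ`, is directed upwards: pasting `τ₁` and `τ₂` along the
`F_θ`-measurable set where `E[φ(τ₁) | F_θ] ≥ E[φ(τ₂) | F_θ]` gives a stopping time `≥ θ` whose
conditional reward is the maximum of the two. Hence the essential supremum `v(θ)` is the a.e.
increasing limit of some `E[φ(τₙ) | F_θ]`, and by monotone convergence, for `A ∈ F_θ'` with
`θ' ≤ θ`, `∫_A v(θ) = lim ∫_A φ(τₙ) = lim ∫_A E[φ(τₙ) | F_θ'] ≤ ∫_A v(θ')`.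
Domination is the case `τ = θ`, and minimality is `E[φ(τ) | F_θ] ≤ E[ψ(τ) | F_θ] ≤ ψ(θ)`. -/

theorem MeasureTheory.IsStoppingTime.piecewise_of_le_of_measurableSet {Ω ι : Type*}
    {m : MeasurableSpace Ω} [Preorder ι] {f : Filtration ι m} {θ τ η : Ω → WithTop ι}
    (hθ : IsStoppingTime f θ) (hτ : IsStoppingTime f τ) (hη : IsStoppingTime f η)
    (hθτ : θ ≤ τ) (hθη : θ ≤ η) {s : Set Ω} [DecidablePred (· ∈ s)]
    (hs : MeasurableSet[hθ.measurableSpace] s) : IsStoppingTime f (s.piecewise τ η) := by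
  intro n
  have hsplit : {ω | s.piecewise τ η ω ≤ n} =
      s ∩ {ω | θ ω ≤ n} ∩ {ω | τ ω ≤ n} ∪ sᶜ ∩ {ω | θ ω ≤ n} ∩ {ω | η ω ≤ n} := by
    ext ω
    by_cases hω : ω ∈ s
    · simpa [hω] using fun h => (hθτ ω).trans h
    · simpa [hω] using fun h => (hθη ω).trans h
  rw [hsplit]
  exact ((hs.2 n).inter (hτ n)).union (((hθ.measurableSet sᶜ).1 hs.compl).2 n |>.inter (hη n))

theorem MeasureTheory.condExp_piecewise {Ω : Type*} {m m0 : MeasurableSpace Ω} {μ : Measure Ω}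
    (hm : m ≤ m0) {f g : Ω → ℝ} (hf : Integrable f μ) (hg : Integrable g μ) {s : Set Ω}
    [DecidablePred (· ∈ s)] (hs : MeasurableSet[m] s) :
    μ[s.piecewise f g | m] =ᵐ[μ] s.piecewise (μ[f | m]) (μ[g | m]) := by
  rw [← Set.indicator_add_compl_eq_piecewise, ← Set.indicator_add_compl_eq_piecewise]
  exact (condExp_add (hf.indicator (hm s hs)) (hg.indicator (hm _ hs.compl)) m).trans
    ((condExp_indicator hf hs).add (condExp_indicator hg hs.compl))

theorem MeasureTheory.condExp_le_of_forall_setIntegral_le {Ω : Type*} {m m0 : MeasurableSpace Ω}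
    {μ : Measure Ω} (hm : m ≤ m0) [SigmaFinite (μ.trim hm)] {f g : Ω → ℝ}
    (hf : Integrable f μ) (hg : Integrable g μ) (hgm : StronglyMeasurable[m] g)
    (hfg : ∀ s, MeasurableSet[m] s → ∫ ω in s, f ω ∂μ ≤ ∫ ω in s, g ω ∂μ) :
    μ[f | m] ≤ᵐ[μ] g := by
  refine ae_le_of_ae_le_trim (hm := hm) <| ae_le_of_forall_setIntegral_le
    (integrable_condExp.trim hm stronglyMeasurable_condExp) (hg.trim hm hgm) fun s hs _ => ?_
  rw [← setIntegral_trim hm stronglyMeasurable_condExp hs, ← setIntegral_trim hm hgm hs,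
    setIntegral_condExp hm hf hs]
  exact hfg s hs

section DirectedFamily

variable {Ω ι : Type*} {m m0 : MeasurableSpace Ω} {μ : Measure Ω} {G : ι → Ω → ℝ}

def IsEssSup (m : MeasurableSpace Ω) (μ : @Measure Ω m0) (G : ι → Ω → ℝ) (v : Ω → ℝ) : Prop :=
  (∀ i, G i ≤ᵐ[μ] v) ∧ ∀ w, StronglyMeasurable[m] w → (∀ i, G i ≤ᵐ[μ] w) → v ≤ᵐ[μ] w

theorem exists_monotone_seq_tendsto_iSup_integral [Nonempty ι]
    (hdir : Directed (· ≤ᵐ[μ] ·) G) (hG : ∀ i, Integrable (G i) μ)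
    (hbdd : BddAbove (Set.range fun i => ∫ ω, G i ω ∂μ)) :
    ∃ σ : ℕ → ι, (∀ n, G (σ n) ≤ᵐ[μ] G (σ (n + 1))) ∧
      Tendsto (fun n => ∫ ω, G (σ n) ω ∂μ) atTop (𝓝 (⨆ i, ∫ ω, G i ω ∂μ)) := by
  set c := ⨆ i, ∫ ω, G i ω ∂μ
  have hnear : ∀ n : ℕ, ∃ i, c - 1 / (n + 1) < ∫ ω, G i ω ∂μ := fun n =>
    exists_lt_of_lt_ciSup (sub_lt_self c Nat.one_div_pos_of_nat)
  choose t ht using hnear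
  choose sup hsup_left hsup_right using hdir
  let σ : ℕ → ι := fun n => Nat.rec (t 0) (fun k i => sup i (t (k + 1))) n
  have hσ_mono : ∀ n, G (σ n) ≤ᵐ[μ] G (σ (n + 1)) := fun n => hsup_left _ _
  have ht_le : ∀ n, ∫ ω, G (t n) ω ∂μ ≤ ∫ ω, G (σ n) ω ∂μ := by
    rintro (_ | n)
    · rfl
    · exact integral_mono_ae (hG _) (hG _) (hsup_right (σ n) (t (n + 1)))
  refine ⟨σ, hσ_mono, tendsto_of_tendsto_of_tendsto_of_le_of_le ?_ tendsto_const_nhds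
    (fun n => (ht n).le.trans (ht_le n)) fun n => le_ciSup hbdd (σ n)⟩
  simpa using (tendsto_const_nhds (x := c)).sub tendsto_one_div_add_atTop_nhds_zero_nat

theorem ae_le_of_tendsto_iSup_integral
    (hdir : Directed (· ≤ᵐ[μ] ·) G) (hG : ∀ i, Integrable (G i) μ)
    (hbdd : BddAbove (Set.range fun i => ∫ ω, G i ω ∂μ)) {σ : ℕ → ι}
    (hσ : Tendsto (fun n => ∫ ω, G (σ n) ω ∂μ) atTop (𝓝 (⨆ i, ∫ ω, G i ω ∂μ)))
    {w : Ω → ℝ} (hw : Integrable w μ) (hσw : ∀ n, G (σ n) ≤ᵐ[μ] w) (i : ι) : G i ≤ᵐ[μ] w := by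
  set c := ⨆ i, ∫ ω, G i ω ∂μ
  have hexcess_int : Integrable (fun ω => max (G i ω - w ω) 0) μ := ((hG i).sub hw).pos_part
  -- compare with a common upper bound `G k` of `G i` and `G (σ n)`, whose integral is `≤ c`
  have hexcess_le : ∀ n, ∫ ω, max (G i ω - w ω) 0 ∂μ ≤ c - ∫ ω, G (σ n) ω ∂μ := by
    intro n
    obtain ⟨k, hik, hσk⟩ := hdir i (σ n)
    calc ∫ ω, max (G i ω - w ω) 0 ∂μ ≤ ∫ ω, (G k ω - G (σ n) ω) ∂μ := by
          refine integral_mono_ae hexcess_int ((hG k).sub (hG _)) ?_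
          filter_upwards [hik, hσk, hσw n] with ω hik hσk hσw
          exact max_le (by linarith) (by linarith)
      _ ≤ c - ∫ ω, G (σ n) ω ∂μ := by
          rw [integral_sub (hG k) (hG _)]
          exact sub_le_sub_right (le_ciSup hbdd k) _
  have hexcess_zero : ∫ ω, max (G i ω - w ω) 0 ∂μ = 0 :=
    le_antisymm (ge_of_tendsto' (by simpa using (tendsto_const_nhds (x := c)).sub hσ) hexcess_le)
      (integral_nonneg fun ω => le_max_right _ _)
  filter_upwards [(integral_eq_zero_iff_of_nonneg (fun ω => le_max_right _ _)
    hexcess_int).mp hexcess_zero] with ω hω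
  exact sub_nonpos.mp (max_eq_right_iff.mp hω)

theorem IsEssSup.exists_seq_ae_monotone_tendsto [Nonempty ι] (hm : m ≤ m0)
    (hdir : Directed (· ≤ᵐ[μ] ·) G) (hG : ∀ i, Integrable (G i) μ)
    (hGm : ∀ i, StronglyMeasurable[m] (G i)) {v : Ω → ℝ} (hv : Integrable v μ)
    (hvG : IsEssSup m μ G v) :
    ∃ σ : ℕ → ι, (∀ᵐ ω ∂μ, Monotone fun n => G (σ n) ω) ∧
      ∀ᵐ ω ∂μ, Tendsto (fun n => G (σ n) ω) atTop (𝓝 (v ω)) := by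
  have hbdd : BddAbove (Set.range fun i => ∫ ω, G i ω ∂μ) :=
    ⟨∫ ω, v ω ∂μ, by rintro _ ⟨i, rfl⟩; exact integral_mono_ae (hG i) hv (hvG.1 i)⟩
  obtain ⟨σ, hσ_mono, hσ_tendsto⟩ := exists_monotone_seq_tendsto_iSup_integral hdir hG hbdd
  have hσ_mono' : ∀ᵐ ω ∂μ, Monotone fun n => G (σ n) ω :=
    (ae_all_iff.2 hσ_mono).mono fun ω h => monotone_nat_of_le_succ h
  have hσ_le_v : ∀ᵐ ω ∂μ, ∀ n, G (σ n) ω ≤ v ω := ae_all_iff.2 fun n => hvG.1 (σ n)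
  set w : Ω → ℝ := fun ω => ⨆ n, G (σ n) ω
  have hw_meas : StronglyMeasurable[m] w :=
    (Measurable.iSup fun n => (hGm (σ n)).measurable).stronglyMeasurable
  have hσ_tendsto_w : ∀ᵐ ω ∂μ, Tendsto (fun n => G (σ n) ω) atTop (𝓝 (w ω)) := by
    filter_upwards [hσ_mono', hσ_le_v] with ω hmono hle
    exact tendsto_atTop_ciSup hmono ⟨v ω, by rintro _ ⟨n, rfl⟩; exact hle n⟩
  have hσ_le_w : ∀ n, G (σ n) ≤ᵐ[μ] w := fun n => by
    filter_upwards [hσ_mono', hσ_tendsto_w] with ω hmono htends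
    exact hmono.ge_of_tendsto htends n
  have hw_le_v : w ≤ᵐ[μ] v := hσ_le_v.mono fun ω h => ciSup_le h
  have hw_int : Integrable w μ :=
    integrable_of_le_of_le (hw_meas.mono hm).aestronglyMeasurable (hσ_le_w 0) hw_le_v (hG _) hv
  have hv_eq_w : v =ᵐ[μ] w := (hvG.2 w hw_meas
    (ae_le_of_tendsto_iSup_integral hdir hG hbdd hσ_tendsto hw_int hσ_le_w)).antisymm hw_le_v
  refine ⟨σ, hσ_mono', ?_⟩
  filter_upwards [hσ_tendsto_w, hv_eq_w] with ω htends heq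
  rwa [heq]

theorem IsEssSup.setIntegral_le [Nonempty ι] (hm : m ≤ m0)
    (hdir : Directed (· ≤ᵐ[μ] ·) G) (hG : ∀ i, Integrable (G i) μ)
    (hGm : ∀ i, StronglyMeasurable[m] (G i)) {v : Ω → ℝ} (hv : Integrable v μ)
    (hvG : IsEssSup m μ G v)
    (s : Set Ω) {c : ℝ} (hc : ∀ i, ∫ ω in s, G i ω ∂μ ≤ c) : ∫ ω in s, v ω ∂μ ≤ c := by
  obtain ⟨σ, hσ_mono, hσ_tendsto⟩ :=
    hvG.exists_seq_ae_monotone_tendsto hm hdir hG hGm hv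
  exact le_of_tendsto' (integral_tendsto_of_tendsto_of_monotone (fun n => (hG _).integrableOn)
    hv.integrableOn (ae_restrict_of_ae hσ_mono) (ae_restrict_of_ae hσ_tendsto)) fun n => hc (σ n)

end DirectedFamily

abbrev BoundedStoppingTime {Ω : Type*} {mΩ : MeasurableSpace Ω} (F : Filtration ℝ mΩ) (T : ℝ) :
    Type _ :=
  {τ : Ω → ℝ // IsStoppingTime F (fun ω => (τ ω : WithTop ℝ)) ∧ ∀ ω, τ ω ∈ Set.Icc 0 T}

namespace BoundedStoppingTime

variable {Ω : Type*} {mΩ : MeasurableSpace Ω} {F : Filtration ℝ mΩ} {T : ℝ}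

theorem exists_eq_piecewise (θ τ₁ τ₂ : BoundedStoppingTime F T) (h₁ : θ.1 ≤ τ₁.1)
    (h₂ : θ.1 ≤ τ₂.1) {A : Set Ω} [DecidablePred (· ∈ A)]
    (hA : MeasurableSet[θ.2.1.measurableSpace] A) :
    ∃ ρ : BoundedStoppingTime F T, θ.1 ≤ ρ.1 ∧ ρ.1 = A.piecewise τ₁.1 τ₂.1 := by
  have hcoe : (fun ω => ((A.piecewise τ₁.1 τ₂.1 ω : ℝ) : WithTop ℝ)) =
      A.piecewise (fun ω => (τ₁.1 ω : WithTop ℝ)) (fun ω => (τ₂.1 ω : WithTop ℝ)) :=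
    funext fun ω => by by_cases hω : ω ∈ A <;> simp [hω]
  refine ⟨⟨A.piecewise τ₁.1 τ₂.1, ?_, fun ω => ?_⟩, fun ω => ?_, rfl⟩
  · rw [hcoe]
    exact θ.2.1.piecewise_of_le_of_measurableSet τ₁.2.1 τ₂.2.1
      (fun ω => WithTop.coe_le_coe.2 (h₁ ω)) (fun ω => WithTop.coe_le_coe.2 (h₂ ω)) hA
  · by_cases hω : ω ∈ A <;> simp [hω, τ₁.2.2 ω, τ₂.2.2 ω]
  · by_cases hω : ω ∈ A <;> simp [hω, h₁ ω, h₂ ω]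

variable {μ : Measure Ω} {φ : BoundedStoppingTime F T → Ω → ℝ}

theorem directed_condExp (hφint : ∀ θ, Integrable (φ θ) μ)
    (hφadm : ∀ θ θ', ∀ᵐ ω ∂μ, θ.1 ω = θ'.1 ω → φ θ ω = φ θ' ω) (θ : BoundedStoppingTime F T) :
    Directed (· ≤ᵐ[μ] ·) fun τ : {τ : BoundedStoppingTime F T // θ.1 ≤ τ.1} =>
      μ[φ τ.1 | θ.2.1.measurableSpace] := by
  classical
  rintro ⟨τ₁, h₁⟩ ⟨τ₂, h₂⟩
  set g₁ := μ[φ τ₁ | θ.2.1.measurableSpace]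
  set g₂ := μ[φ τ₂ | θ.2.1.measurableSpace]
  -- stop at `τ₁` where it promises more than `τ₂`, and at `τ₂` elsewhere
  set A : Set Ω := {ω | g₂ ω ≤ g₁ ω}
  have hA : MeasurableSet[θ.2.1.measurableSpace] A :=
    measurableSet_le stronglyMeasurable_condExp.measurable stronglyMeasurable_condExp.measurable
  have hA_max : A.piecewise g₁ g₂ = g₁ ⊔ g₂ := funext fun ω => by
    by_cases hω : ω ∈ A
    · rw [Set.piecewise_eq_of_mem _ _ _ hω, Pi.sup_apply, sup_eq_left.mpr hω]
    · rw [Set.piecewise_eq_of_notMem _ _ _ hω, Pi.sup_apply, sup_eq_right.mpr (not_le.mp hω).le]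
  obtain ⟨ρ, hθρ, hρ⟩ := exists_eq_piecewise θ τ₁ τ₂ h₁ h₂ hA
  have hφρ : φ ρ =ᵐ[μ] A.piecewise (φ τ₁) (φ τ₂) := by
    filter_upwards [hφadm ρ τ₁, hφadm ρ τ₂] with ω h₁ h₂
    by_cases hω : ω ∈ A
    · simp [hω, h₁ (by simp [hρ, hω])]
    · simp [hω, h₂ (by simp [hρ, hω])]
  have hρ_max : μ[φ ρ | θ.2.1.measurableSpace] =ᵐ[μ] g₁ ⊔ g₂ :=
    hA_max ▸ (condExp_congr_ae hφρ).trans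
      (condExp_piecewise θ.2.1.measurableSpace_le (hφint τ₁) (hφint τ₂) hA)
  refine ⟨⟨ρ, hθρ⟩, ?_, ?_⟩ <;> filter_upwards [hρ_max] with ω hω <;> simp [hω, g₁, g₂]

variable {v : BoundedStoppingTime F T → Ω → ℝ}

theorem condExp_le_of_isEssSup_condExp [IsFiniteMeasure μ]
    (hφint : ∀ θ, Integrable (φ θ) μ)
    (hφadm : ∀ θ θ', ∀ᵐ ω ∂μ, θ.1 ω = θ'.1 ω → φ θ ω = φ θ' ω)
    (hvmeas : ∀ θ, StronglyMeasurable[θ.2.1.measurableSpace] (v θ))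
    (hvint : ∀ θ, Integrable (v θ) μ)
    (hv : ∀ θ : BoundedStoppingTime F T, IsEssSup θ.2.1.measurableSpace μ
      (fun τ : {τ : BoundedStoppingTime F T // θ.1 ≤ τ.1} => μ[φ τ.1 | θ.2.1.measurableSpace])
      (v θ))
    {θ θ' : BoundedStoppingTime F T} (hle : θ'.1 ≤ θ.1) :
    μ[v θ | θ'.2.1.measurableSpace] ≤ᵐ[μ] v θ' := by
  have hm := θ.2.1.measurableSpace_le
  have hm' := θ'.2.1.measurableSpace_le
  have hmm' : θ'.2.1.measurableSpace ≤ θ.2.1.measurableSpace :=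
    θ'.2.1.measurableSpace_mono θ.2.1 fun ω => WithTop.coe_le_coe.2 (hle ω)
  refine condExp_le_of_forall_setIntegral_le hm' (hvint θ) (hvint θ') (hvmeas θ') fun s hs => ?_
  have : Nonempty {τ : BoundedStoppingTime F T // θ.1 ≤ τ.1} := ⟨⟨θ, le_rfl⟩⟩
  refine (hv θ).setIntegral_le hm (directed_condExp hφint hφadm θ) (fun _ => integrable_condExp)
    (fun _ => stronglyMeasurable_condExp) (hvint θ) s fun τ => ?_
  calc ∫ ω in s, μ[φ τ.1 | θ.2.1.measurableSpace] ω ∂μ = ∫ ω in s, φ τ.1 ω ∂μ :=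
          setIntegral_condExp hm (hφint _) (hmm' s hs)
      _ = ∫ ω in s, μ[φ τ.1 | θ'.2.1.measurableSpace] ω ∂μ :=
          (setIntegral_condExp hm' (hφint _) hs).symm
      _ ≤ ∫ ω in s, v θ' ω ∂μ :=
          setIntegral_mono_ae integrable_condExp.integrableOn (hvint θ').integrableOn
            ((hv θ').1 ⟨τ.1, hle.trans τ.2⟩)

end BoundedStoppingTime

theorem stmt_8_general {Ω : Type*} {mΩ : MeasurableSpace Ω} {μ : Measure Ω} [IsProbabilityMeasure μ]
    {F : Filtration ℝ mΩ} {T : ℝ}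
    -- `ST` : stopping times with values in `[0,T]`
    (φ v : {τ : Ω → ℝ // IsStoppingTime F (fun ω => (τ ω : WithTop ℝ)) ∧ ∀ ω, τ ω ∈ Set.Icc 0 T} → Ω → ℝ)
    -- `φ` is an admissible, integrable family with `E[ess sup φ⁻] < ∞`
    (hφmeas : ∀ θ, StronglyMeasurable[θ.2.1.measurableSpace] (φ θ))
    (hφint : ∀ θ, Integrable (φ θ) μ)
    (hφadm : ∀ θ θ', ∀ᵐ ω ∂μ, θ.1 ω = θ'.1 ω → φ θ ω = φ θ' ω)
    -- `v` is admissible and integrable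
    (hvmeas : ∀ θ, StronglyMeasurable[θ.2.1.measurableSpace] (v θ))
    (hvint : ∀ θ, Integrable (v θ) μ)
    -- `v(θ)` is the essential supremum of `{E[φ(τ)|F_θ] : τ ≥ θ}` : least a.e. upper bound
    (hvub : ∀ θ τ, θ.1 ≤ τ.1 → μ[φ τ | θ.2.1.measurableSpace] ≤ᵐ[μ] v θ)
    (hvlub : ∀ θ (w : Ω → ℝ), StronglyMeasurable[θ.2.1.measurableSpace] w →
      (∀ τ, θ.1 ≤ τ.1 → μ[φ τ | θ.2.1.measurableSpace] ≤ᵐ[μ] w) → v θ ≤ᵐ[μ] w) :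
    -- `v` is a supermartingale family …
    (∀ θ θ', θ'.1 ≤ θ.1 → μ[v θ | θ'.2.1.measurableSpace] ≤ᵐ[μ] v θ') ∧
    -- … which dominates `φ` …
    (∀ θ, φ θ ≤ᵐ[μ] v θ) ∧
    -- … and is the smallest such family.
    (∀ ψ : {τ : Ω → ℝ // IsStoppingTime F (fun ω => (τ ω : WithTop ℝ)) ∧ ∀ ω, τ ω ∈ Set.Icc 0 T} → Ω → ℝ,
      (∀ θ, StronglyMeasurable[θ.2.1.measurableSpace] (ψ θ)) →
      (∀ θ, Integrable (ψ θ) μ) →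
      (∀ θ θ', θ'.1 ≤ θ.1 → μ[ψ θ | θ'.2.1.measurableSpace] ≤ᵐ[μ] ψ θ') →
      (∀ θ, φ θ ≤ᵐ[μ] ψ θ) →
      ∀ θ, v θ ≤ᵐ[μ] ψ θ) := by
  refine ⟨fun θ θ' hle => ?_, fun θ => ?_, fun ψ hψm hψint hψsuper hψφ θ => ?_⟩
  · exact BoundedStoppingTime.condExp_le_of_isEssSup_condExp hφint hφadm hvmeas hvint
      (fun θ => ⟨fun τ => hvub θ τ.1 τ.2, fun w hw hub => hvlub θ w hw fun τ hτ => hub ⟨τ, hτ⟩⟩) hle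
  · simpa only [condExp_of_stronglyMeasurable θ.2.1.measurableSpace_le (hφmeas θ) (hφint θ)]
      using hvub θ θ le_rfl
  · exact hvlub θ (ψ θ) (hψm θ) fun τ hτ =>
      (condExp_mono (hφint τ) (hψint τ) (hψφ τ)).trans (hψsuper τ θ hτ)

/-- The value family `v(θ) = ess sup_{τ ≥ θ} E[φ(τ) | F_θ]` of the optimal stopping
problem is the smallest supermartingale family dominating the reward family `φ`. -/
theorem stmt_8 {Ω : Type*} {mΩ : MeasurableSpace Ω} {μ : Measure Ω} [IsProbabilityMeasure μ]
    {F : Filtration ℝ mΩ} {T : ℝ} (hT : 0 ≤ T)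
    -- `ST` : stopping times with values in `[0,T]`
    (φ v : {τ : Ω → ℝ // IsStoppingTime F (fun ω => (τ ω : WithTop ℝ)) ∧ ∀ ω, τ ω ∈ Set.Icc 0 T} → Ω → ℝ)
    -- `φ` is an admissible, integrable family with `E[ess sup φ⁻] < ∞`
    (hφmeas : ∀ θ, StronglyMeasurable[θ.2.1.measurableSpace] (φ θ))
    (hφint : ∀ θ, Integrable (φ θ) μ)
    (hφadm : ∀ θ θ', ∀ᵐ ω ∂μ, θ.1 ω = θ'.1 ω → φ θ ω = φ θ' ω)
    (hφneg : ∃ g : Ω → ℝ, Integrable g μ ∧ ∀ θ, ∀ᵐ ω ∂μ, max (-(φ θ ω)) 0 ≤ g ω)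
    -- `v` is admissible and integrable
    (hvmeas : ∀ θ, StronglyMeasurable[θ.2.1.measurableSpace] (v θ))
    (hvint : ∀ θ, Integrable (v θ) μ)
    (hvadm : ∀ θ θ', ∀ᵐ ω ∂μ, θ.1 ω = θ'.1 ω → v θ ω = v θ' ω)
    -- `v(θ)` is the essential supremum of `{E[φ(τ)|F_θ] : τ ≥ θ}` : least a.e. upper bound
    (hvub : ∀ θ τ, θ.1 ≤ τ.1 → μ[φ τ | θ.2.1.measurableSpace] ≤ᵐ[μ] v θ)
    (hvlub : ∀ θ (w : Ω → ℝ), StronglyMeasurable[θ.2.1.measurableSpace] w →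
      (∀ τ, θ.1 ≤ τ.1 → μ[φ τ | θ.2.1.measurableSpace] ≤ᵐ[μ] w) → v θ ≤ᵐ[μ] w) :
    -- `v` is a supermartingale family …
    (∀ θ θ', θ'.1 ≤ θ.1 → μ[v θ | θ'.2.1.measurableSpace] ≤ᵐ[μ] v θ') ∧
    -- … which dominates `φ` …
    (∀ θ, φ θ ≤ᵐ[μ] v θ) ∧
    -- … and is the smallest such family.
    (∀ ψ : {τ : Ω → ℝ // IsStoppingTime F (fun ω => (τ ω : WithTop ℝ)) ∧ ∀ ω, τ ω ∈ Set.Icc 0 T} → Ω → ℝ,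
      (∀ θ, StronglyMeasurable[θ.2.1.measurableSpace] (ψ θ)) →
      (∀ θ, Integrable (ψ θ) μ) →
      (∀ θ θ', θ'.1 ≤ θ.1 → μ[ψ θ | θ'.2.1.measurableSpace] ≤ᵐ[μ] ψ θ') →
      (∀ θ, φ θ ≤ᵐ[μ] ψ θ) →
      ∀ θ, v θ ≤ᵐ[μ] ψ θ) :=
  stmt_8_general φ v hφmeas hφint hφadm hvmeas hvint hvub hvlub
end
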